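/- arXiv:2006.00267 — 2 statements merged into one kernel-verified Lean document; each statement's English description precedes it below -/
import Mathlib

section
/- Let (Ω, F, ℙ) be a probability space, X : Ω → ℝ^p and A : Ω → ℝ random variables, with σ(X) and σ(X, A) the sub-σ-algebras generated by X and by the pair (X, A). Let Y : Ω → ℝ be integrable with E[Y | σ(X, A)] = M₀ + G₀ almost surely, where M₀ is σ(X)-measurable and integrable, and G₀ is σ(X, A)-measurable with G₀(ω) ∈ (0, 1) almost surely. Let G : Ω → ℝ be bounded, σ(X, A)-measurable, with M₀·G integrable and E[M₀ · G] = 0. Then E[Y·G − log(1 + exp(G))] ≤ E[G₀·log(G₀) + (1 − G₀)·log(1 − G₀)], and equality holds if and only if G = log(G₀ / (1 − G₀)) almost surely. -/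
/-!
Conditioning on `σ(X, A)` turns `E[Y G]` into `E[(M₀ + G₀) G]`, and the orthogonality
`E[M₀ G] = 0` leaves `E[G₀ G]`. Pointwise, with `σ` the logistic function,
`c s - log (1 + exp s) = c log σ(s) + (1 - c) log (1 - σ(s))` is a binary cross-entropy, which by
Gibbs' inequality is at most the negative binary entropy `c log c + (1 - c) log (1 - c)`, with
equality exactly when `σ(s) = c`, i.e. `s = log (c / (1 - c))`. Integrating gives the inequality,
and equality of the integrals of two a.e.-ordered functions forces a.e. equality.
-/

open MeasureTheory Real InformationTheory Set

lemma sigmoid_eq_exp_div (s : ℝ) : sigmoid s = exp s / (1 + exp s) := by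
  rw [sigmoid_def, exp_neg]
  field_simp
  ring

lemma log_sigmoid (s : ℝ) : log (sigmoid s) = s - log (1 + exp s) := by
  rw [sigmoid_eq_exp_div, log_div (exp_pos s).ne' (by positivity), log_exp]

lemma log_one_sub_sigmoid (s : ℝ) : log (1 - sigmoid s) = -log (1 + exp s) := by
  have h : 1 - sigmoid s = (1 + exp s)⁻¹ := by
    rw [sigmoid_eq_exp_div]
    field_simp
    ring
  rw [h, log_inv]

lemma log_sigmoid_div_one_sub_sigmoid (s : ℝ) : log (sigmoid s / (1 - sigmoid s)) = s := by
  rw [log_div (sigmoid_pos s).ne' (sub_pos.2 (sigmoid_lt_one s)).ne', log_sigmoid,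
    log_one_sub_sigmoid]
  ring

lemma sigmoid_log_div_one_sub {c : ℝ} (hc : c ∈ Ioo 0 1) : sigmoid (log (c / (1 - c))) = c := by
  have h1c : 0 < 1 - c := sub_pos.2 hc.2
  have hc0 : c ≠ 0 := hc.1.ne'
  rw [sigmoid_def, exp_neg, exp_log (div_pos hc.1 h1c), inv_div]
  field_simp
  ring

lemma sigmoid_eq_iff {c : ℝ} (hc : c ∈ Ioo 0 1) (s : ℝ) :
    sigmoid s = c ↔ s = log (c / (1 - c)) :=
  ⟨fun h => h ▸ (log_sigmoid_div_one_sub_sigmoid s).symm,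
    fun h => h ▸ sigmoid_log_div_one_sub hc⟩

lemma mul_sub_log_one_add_exp_eq (c s : ℝ) :
    c * s - log (1 + exp s) = c * log (sigmoid s) + (1 - c) * log (1 - sigmoid s) := by
  rw [log_sigmoid, log_one_sub_sigmoid]
  ring

lemma binary_gibbs_gap_eq_klFun {c d : ℝ} (hc : c ∈ Ioo 0 1) (hd : d ∈ Ioo 0 1) :
    c * log c + (1 - c) * log (1 - c) - (c * log d + (1 - c) * log (1 - d)) =
      d * klFun (c / d) + (1 - d) * klFun ((1 - c) / (1 - d)) := by
  have h1c : 0 < 1 - c := sub_pos.2 hc.2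
  have h1d : 0 < 1 - d := sub_pos.2 hd.2
  have hd0 : d ≠ 0 := hd.1.ne'
  have h1d0 : 1 - d ≠ 0 := h1d.ne'
  rw [klFun_apply, klFun_apply, log_div hc.1.ne' hd0, log_div h1c.ne' h1d0]
  field_simp
  ring

lemma binary_gibbs_le {c d : ℝ} (hc : c ∈ Ioo 0 1) (hd : d ∈ Ioo 0 1) :
    c * log d + (1 - c) * log (1 - d) ≤ c * log c + (1 - c) * log (1 - c) := by
  have h := binary_gibbs_gap_eq_klFun hc hd
  have h1 : 0 ≤ d * klFun (c / d) :=
    mul_nonneg hd.1.le (klFun_nonneg (div_pos hc.1 hd.1).le)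
  have h2 : 0 ≤ (1 - d) * klFun ((1 - c) / (1 - d)) :=
    mul_nonneg (sub_pos.2 hd.2).le (klFun_nonneg (div_pos (sub_pos.2 hc.2) (sub_pos.2 hd.2)).le)
  linarith

lemma binary_gibbs_eq_iff {c d : ℝ} (hc : c ∈ Ioo 0 1) (hd : d ∈ Ioo 0 1) :
    c * log d + (1 - c) * log (1 - d) = c * log c + (1 - c) * log (1 - c) ↔ d = c := by
  have h1c : 0 < 1 - c := sub_pos.2 hc.2
  have h1d : 0 < 1 - d := sub_pos.2 hd.2
  have h1 : 0 ≤ d * klFun (c / d) := mul_nonneg hd.1.le (klFun_nonneg (div_pos hc.1 hd.1).le)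
  have h2 : 0 ≤ (1 - d) * klFun ((1 - c) / (1 - d)) :=
    mul_nonneg h1d.le (klFun_nonneg (div_pos h1c h1d).le)
  rw [← sub_eq_zero, ← neg_eq_zero, neg_sub, binary_gibbs_gap_eq_klFun hc hd,
    add_eq_zero_iff_of_nonneg h1 h2, mul_eq_zero_iff_left hd.1.ne', mul_eq_zero_iff_left h1d.ne',
    klFun_eq_zero_iff (div_pos hc.1 hd.1).le, klFun_eq_zero_iff (div_pos h1c h1d).le,
    div_eq_one_iff_eq hd.1.ne', div_eq_one_iff_eq h1d.ne']
  exact ⟨fun h => h.1.symm, fun h => ⟨h.symm, by rw [h]⟩⟩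

lemma mul_sub_log_one_add_exp_le {c : ℝ} (hc : c ∈ Ioo 0 1) (s : ℝ) :
    c * s - log (1 + exp s) ≤ c * log c + (1 - c) * log (1 - c) := by
  rw [mul_sub_log_one_add_exp_eq]
  exact binary_gibbs_le hc ⟨sigmoid_pos s, sigmoid_lt_one s⟩

lemma mul_sub_log_one_add_exp_eq_iff {c : ℝ} (hc : c ∈ Ioo 0 1) (s : ℝ) :
    c * s - log (1 + exp s) = c * log c + (1 - c) * log (1 - c) ↔ s = log (c / (1 - c)) := by
  rw [mul_sub_log_one_add_exp_eq, binary_gibbs_eq_iff hc ⟨sigmoid_pos s, sigmoid_lt_one s⟩,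
    sigmoid_eq_iff hc]

lemma neg_binEntropy (p : ℝ) : -binEntropy p = p * log p + (1 - p) * log (1 - p) := by
  rw [binEntropy, log_inv, log_inv]
  ring

section Integrability

variable {Ω : Type*} {m₀ : MeasurableSpace Ω} {μ : Measure Ω} [IsFiniteMeasure μ]

lemma integrable_binEntropy_comp {f : Ω → ℝ} (hf : AEMeasurable f μ)
    (hf01 : ∀ᵐ ω ∂μ, f ω ∈ Icc 0 1) : Integrable (fun ω => binEntropy (f ω)) μ := by
  refine Integrable.of_bound (binEntropy_continuous.comp_aestronglyMeasurable
    hf.aestronglyMeasurable) (log 2) ?_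
  filter_upwards [hf01] with ω h
  rw [norm_of_nonneg (binEntropy_nonneg h.1 h.2)]
  exact binEntropy_le_log_two

lemma integrable_log_one_add_exp_comp {f : Ω → ℝ} (hf : AEMeasurable f μ) {C : ℝ}
    (hC : ∀ᵐ ω ∂μ, f ω ≤ C) : Integrable (fun ω => log (1 + exp (f ω))) μ := by
  refine Integrable.of_bound (hf.exp.const_add 1).log.aestronglyMeasurable (exp C) ?_
  filter_upwards [hC] with ω h
  have hpos : 0 < 1 + exp (f ω) := by positivity
  rw [norm_of_nonneg (log_nonneg (by linarith [exp_pos (f ω)]))]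
  calc log (1 + exp (f ω)) ≤ exp (f ω) := by linarith [log_le_sub_one_of_pos hpos]
    _ ≤ exp C := exp_le_exp.2 h

end Integrability

lemma integral_mul_eq_of_condExp_ae_eq {Ω : Type*} {m m₀ : MeasurableSpace Ω} {μ : Measure Ω}
    (hm : m ≤ m₀) [SigmaFinite (μ.trim hm)] {Y Z G : Ω → ℝ} (hY : Integrable Y μ)
    (hG : StronglyMeasurable[m] G) (hYG : Integrable (fun ω => Y ω * G ω) μ)
    (hcond : μ[Y | m] =ᵐ[μ] Z) : ∫ ω, Y ω * G ω ∂μ = ∫ ω, Z ω * G ω ∂μ := by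
  have hGY : Integrable (G * Y) μ := hYG.congr (.of_forall fun ω => mul_comm (Y ω) (G ω))
  calc ∫ ω, Y ω * G ω ∂μ = ∫ ω, (G * Y) ω ∂μ := by simp only [Pi.mul_apply, mul_comm]
    _ = ∫ ω, μ[G * Y | m] ω ∂μ := (integral_condExp hm).symm
    _ = ∫ ω, Z ω * G ω ∂μ := by
      refine integral_congr_ae ?_
      filter_upwards [condExp_mul_of_stronglyMeasurable_left hG hGY hY, hcond] with ω h1 h2
      rw [h1, Pi.mul_apply, h2, mul_comm]

theorem stmt10_general {Ω : Type*} [MeasurableSpace Ω] (ℙ : Measure Ω) [IsProbabilityMeasure ℙ]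
    {p : ℕ} (X : Ω → (Fin p → ℝ)) (A : Ω → ℝ)
    (hX : Measurable X) (hA : Measurable A)
    (Y M₀ G₀ : Ω → ℝ)
    (hY : Integrable Y ℙ)
    (hcond : ℙ[Y | MeasurableSpace.comap (fun ω => (X ω, A ω)) inferInstance]
      =ᵐ[ℙ] fun ω => M₀ ω + G₀ ω)
    (hG₀meas : Measurable[MeasurableSpace.comap (fun ω => (X ω, A ω)) inferInstance] G₀)
    (hG₀range : ∀ᵐ ω ∂ℙ, G₀ ω ∈ Set.Ioo (0 : ℝ) 1)
    (G : Ω → ℝ)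
    (hGbdd : ∃ C, ∀ ω, |G ω| ≤ C)
    (hGmeas : Measurable[MeasurableSpace.comap (fun ω => (X ω, A ω)) inferInstance] G)
    (hMG : Integrable (fun ω => M₀ ω * G ω) ℙ)
    (hMGzero : ∫ ω, M₀ ω * G ω ∂ℙ = 0) :
    ∫ ω, (Y ω * G ω - Real.log (1 + Real.exp (G ω))) ∂ℙ ≤
      ∫ ω, (G₀ ω * Real.log (G₀ ω) + (1 - G₀ ω) * Real.log (1 - G₀ ω)) ∂ℙ ∧
    (∫ ω, (Y ω * G ω - Real.log (1 + Real.exp (G ω))) ∂ℙ =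
        ∫ ω, (G₀ ω * Real.log (G₀ ω) + (1 - G₀ ω) * Real.log (1 - G₀ ω)) ∂ℙ ↔
      G =ᵐ[ℙ] fun ω => Real.log (G₀ ω / (1 - G₀ ω))) := by
  obtain ⟨C, hC⟩ := hGbdd
  have hσ := (hX.prodMk hA).comap_le
  have hG : Measurable G := hGmeas.mono hσ le_rfl
  have hG₀ : Measurable G₀ := hG₀meas.mono hσ le_rfl
  have hGC : ∀ᵐ ω ∂ℙ, ‖G ω‖ ≤ C :=
    .of_forall fun ω => (norm_eq_abs _).trans_le (hC ω)
  have hG₀1 : ∀ᵐ ω ∂ℙ, ‖G₀ ω‖ ≤ 1 := hG₀range.mono fun ω h => by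
    rw [norm_of_nonneg h.1.le]; exact h.2.le
  have hG₀G : Integrable (fun ω => G₀ ω * G ω) ℙ :=
    (Integrable.of_bound hG.aestronglyMeasurable C hGC).bdd_mul hG₀.aestronglyMeasurable hG₀1
  have hYGint : Integrable (fun ω => Y ω * G ω) ℙ := hY.mul_bdd hG.aestronglyMeasurable hGC
  have hlog : Integrable (fun ω => log (1 + exp (G ω))) ℙ :=
    integrable_log_one_add_exp_comp hG.aemeasurable
      (hGC.mono fun ω h => (le_norm_self _).trans h)
  have hYG : ∫ ω, Y ω * G ω ∂ℙ = ∫ ω, G₀ ω * G ω ∂ℙ := by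
    rw [integral_mul_eq_of_condExp_ae_eq hσ hY hGmeas.stronglyMeasurable hYGint hcond]
    simp only [add_mul]
    rw [integral_add hMG hG₀G, hMGzero, zero_add]
  set f := fun ω => G₀ ω * G ω - log (1 + exp (G ω))
  set g := fun ω => G₀ ω * log (G₀ ω) + (1 - G₀ ω) * log (1 - G₀ ω)
  have hf : Integrable f ℙ := hG₀G.sub hlog
  have hg : Integrable g ℙ :=
    (integrable_binEntropy_comp hG₀.aemeasurable
      (hG₀range.mono fun ω h => Ioo_subset_Icc_self h)).neg.congr
        (.of_forall fun ω => neg_binEntropy (G₀ ω))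
  have hfg : f ≤ᵐ[ℙ] g := hG₀range.mono fun ω h => mul_sub_log_one_add_exp_le h (G ω)
  have hlhs : ∫ ω, (Y ω * G ω - log (1 + exp (G ω))) ∂ℙ = ∫ ω, f ω ∂ℙ := by
    rw [integral_sub hYGint hlog, integral_sub hG₀G hlog, hYG]
  rw [hlhs, integral_eq_iff_of_ae_le hf hg hfg]
  exact ⟨integral_mono_ae hf hg hfg, Filter.eventually_congr
    (hG₀range.mono fun ω h => mul_sub_log_one_add_exp_eq_iff h (G ω))⟩

/-- Bernoulli instance of Proposition 1: if `E[Y | σ(X,A)] = M₀ + G₀` a.s. with `M₀` a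
`σ(X)`-measurable integrable main effect and `G₀` a `σ(X,A)`-measurable component valued in
`(0,1)` a.s., then for any bounded `σ(X,A)`-measurable candidate `G` with `E[M₀·G] = 0`,
`E[Y·G − log(1 + exp G)] ≤ E[G₀·log G₀ + (1 − G₀)·log(1 − G₀)]`, with equality iff
`G = log(G₀/(1 − G₀))` almost surely. -/
theorem stmt10 {Ω : Type*} [MeasurableSpace Ω] (ℙ : Measure Ω) [IsProbabilityMeasure ℙ]
    {p : ℕ} (X : Ω → (Fin p → ℝ)) (A : Ω → ℝ)
    (hX : Measurable X) (hA : Measurable A)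
    (Y M₀ G₀ : Ω → ℝ)
    (hY : Integrable Y ℙ)
    (hcond : ℙ[Y | MeasurableSpace.comap (fun ω => (X ω, A ω)) inferInstance]
      =ᵐ[ℙ] fun ω => M₀ ω + G₀ ω)
    (hM₀meas : Measurable[MeasurableSpace.comap X inferInstance] M₀)
    (hM₀ : Integrable M₀ ℙ)
    (hG₀meas : Measurable[MeasurableSpace.comap (fun ω => (X ω, A ω)) inferInstance] G₀)
    (hG₀range : ∀ᵐ ω ∂ℙ, G₀ ω ∈ Set.Ioo (0 : ℝ) 1)
    (G : Ω → ℝ)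
    (hGbdd : ∃ C, ∀ ω, |G ω| ≤ C)
    (hGmeas : Measurable[MeasurableSpace.comap (fun ω => (X ω, A ω)) inferInstance] G)
    (hMG : Integrable (fun ω => M₀ ω * G ω) ℙ)
    (hMGzero : ∫ ω, M₀ ω * G ω ∂ℙ = 0) :
    ∫ ω, (Y ω * G ω - Real.log (1 + Real.exp (G ω))) ∂ℙ ≤
      ∫ ω, (G₀ ω * Real.log (G₀ ω) + (1 - G₀ ω) * Real.log (1 - G₀ ω)) ∂ℙ ∧
    (∫ ω, (Y ω * G ω - Real.log (1 + Real.exp (G ω))) ∂ℙ =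
        ∫ ω, (G₀ ω * Real.log (G₀ ω) + (1 - G₀ ω) * Real.log (1 - G₀ ω)) ∂ℙ ↔
      G =ᵐ[ℙ] fun ω => Real.log (G₀ ω / (1 - G₀ ω))) :=
  stmt10_general ℙ X A hX hA Y M₀ G₀ hY hcond hG₀meas hG₀range G hGbdd hGmeas hMG hMGzero
end

section
/- Let (Ω, F, ℙ) be a probability space, X : Ω → ℝ^p and A : Ω → ℝ random variables, with σ(X) and σ(X, A) the sub-σ-algebras generated by X and by the pair (X, A). Let Y : Ω → ℝ be integrable with E[Y | σ(X, A)] = M₀ + G₀ almost surely, where M₀ is σ(X)-measurable and integrable, and G₀ is σ(X, A)-measurable with G₀(ω) > 0 almost surely, G₀ integrable, and G₀·log(G₀) integrable. Let G : Ω → ℝ be bounded, σ(X, A)-measurable, with M₀·G integrable and E[M₀ · G] = 0. Then E[Y·G − exp(G)] ≤ E[G₀·log(G₀) − G₀], and equality holds if and only if G = log(G₀) almost surely. -/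
/-!
Since `G` is bounded and `σ(X, A)`-measurable, pulling it out of the conditional expectation
gives `E[Y G] = E[(M₀ + G₀) G]`, and the orthogonality `E[M₀ G] = 0` reduces the criterion to
`E[G₀ G − exp G]`. Pointwise,
`t ↦ c t − exp t` is strictly concave with maximum `c log c − c` attained only at `t = log c`
(the convex conjugate of `exp`), which gives the inequality and its equality case.
-/

open MeasureTheory Filter

namespace Real

lemma mul_log_sub_sub_mul_sub_exp {c : ℝ} (hc : 0 < c) (t : ℝ) :
    (c * log c - c) - (c * t - exp t) = c * (exp (t - log c) - (t - log c) - 1) := by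
  rw [exp_sub, exp_log hc]
  field_simp
  ring

lemma mul_sub_exp_le_mul_log_sub {c : ℝ} (hc : 0 < c) (t : ℝ) :
    c * t - exp t ≤ c * log c - c := by
  have h := mul_log_sub_sub_mul_sub_exp hc t
  have : 0 ≤ c * (exp (t - log c) - (t - log c) - 1) :=
    mul_nonneg hc.le (by linarith [add_one_le_exp (t - log c)])
  linarith

lemma mul_sub_exp_lt_mul_log_sub {c t : ℝ} (hc : 0 < c) (ht : t ≠ log c) :
    c * t - exp t < c * log c - c := by
  have h := mul_log_sub_sub_mul_sub_exp hc t
  have : 0 < c * (exp (t - log c) - (t - log c) - 1) :=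
    mul_pos hc (by linarith [add_one_lt_exp (sub_ne_zero.2 ht)])
  linarith

end Real

namespace MeasureTheory

variable {Ω : Type*} {m mΩ : MeasurableSpace Ω} {μ : Measure Ω} [IsFiniteMeasure μ]

lemma integral_mul_eq_integral_mul_condExp (hm : m ≤ mΩ) {f g : Ω → ℝ}
    (hf : StronglyMeasurable[m] f) (hg : Integrable g μ) (C : ℝ)
    (hf_bound : ∀ᵐ ω ∂μ, ‖f ω‖ ≤ C) :
    ∫ ω, f ω * g ω ∂μ = ∫ ω, f ω * (μ[g | m]) ω ∂μ :=
  (integral_condExp hm).symm.trans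
    (integral_congr_ae (condExp_stronglyMeasurable_mul_of_bound hm hf hg C hf_bound))

lemma integrable_exp_of_bound {f : Ω → ℝ} (hf : AEStronglyMeasurable f μ) (C : ℝ)
    (hf_bound : ∀ᵐ ω ∂μ, ‖f ω‖ ≤ C) : Integrable (fun ω => Real.exp (f ω)) μ :=
  .of_bound (Real.continuous_exp.comp_aestronglyMeasurable hf) (Real.exp C) <| by
    filter_upwards [hf_bound] with ω hω
    rw [Real.norm_of_nonneg (Real.exp_pos _).le]
    exact Real.exp_le_exp.2 ((le_abs_self _).trans hω)

lemma integral_mul_sub_exp_le_integral_mul_log_sub {c t : Ω → ℝ} (hc_pos : ∀ᵐ ω ∂μ, 0 < c ω)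
    (hc : Integrable c μ) (hc_log : Integrable (fun ω => c ω * Real.log (c ω)) μ)
    (ht : AEStronglyMeasurable t μ) (C : ℝ) (ht_bound : ∀ᵐ ω ∂μ, ‖t ω‖ ≤ C) :
    ∫ ω, (c ω * t ω - Real.exp (t ω)) ∂μ ≤ ∫ ω, (c ω * Real.log (c ω) - c ω) ∂μ ∧
      (∫ ω, (c ω * t ω - Real.exp (t ω)) ∂μ = ∫ ω, (c ω * Real.log (c ω) - c ω) ∂μ ↔
        t =ᵐ[μ] fun ω => Real.log (c ω)) := by
  have hint : Integrable (fun ω => c ω * t ω - Real.exp (t ω)) μ :=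
    (hc.mul_bdd ht ht_bound).sub (integrable_exp_of_bound ht C ht_bound)
  have hle : (fun ω => c ω * t ω - Real.exp (t ω)) ≤ᵐ[μ]
      fun ω => c ω * Real.log (c ω) - c ω := by
    filter_upwards [hc_pos] with ω hω using Real.mul_sub_exp_le_mul_log_sub hω (t ω)
  refine ⟨integral_mono_ae hint (hc_log.sub hc) hle,
    (integral_eq_iff_of_ae_le hint (hc_log.sub hc) hle).trans ⟨fun h => ?_, fun h => ?_⟩⟩
  · filter_upwards [h, hc_pos] with ω hω hpos
    by_contra hne
    exact (Real.mul_sub_exp_lt_mul_log_sub hpos hne).ne hω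
  · filter_upwards [h, hc_pos] with ω hω hpos
    rw [hω, Real.exp_log hpos]
    rfl

end MeasureTheory

theorem stmt11_general {Ω : Type*} [MeasurableSpace Ω] (ℙ : Measure Ω) [IsProbabilityMeasure ℙ]
    {p : ℕ} (X : Ω → (Fin p → ℝ)) (A : Ω → ℝ)
    (hX : Measurable X) (hA : Measurable A)
    (Y M₀ G₀ : Ω → ℝ)
    (hY : Integrable Y ℙ)
    (hcond : ℙ[Y | MeasurableSpace.comap (fun ω => (X ω, A ω)) inferInstance]
      =ᵐ[ℙ] fun ω => M₀ ω + G₀ ω)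
    (hG₀pos : ∀ᵐ ω ∂ℙ, 0 < G₀ ω)
    (hG₀int : Integrable G₀ ℙ)
    (hG₀logint : Integrable (fun ω => G₀ ω * Real.log (G₀ ω)) ℙ)
    (G : Ω → ℝ)
    (hGbdd : ∃ C, ∀ ω, |G ω| ≤ C)
    (hGmeas : Measurable[MeasurableSpace.comap (fun ω => (X ω, A ω)) inferInstance] G)
    (hMG : Integrable (fun ω => M₀ ω * G ω) ℙ)
    (hMGzero : ∫ ω, M₀ ω * G ω ∂ℙ = 0) :
    ∫ ω, (Y ω * G ω - Real.exp (G ω)) ∂ℙ ≤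
      ∫ ω, (G₀ ω * Real.log (G₀ ω) - G₀ ω) ∂ℙ ∧
    (∫ ω, (Y ω * G ω - Real.exp (G ω)) ∂ℙ =
        ∫ ω, (G₀ ω * Real.log (G₀ ω) - G₀ ω) ∂ℙ ↔
      G =ᵐ[ℙ] fun ω => Real.log (G₀ ω)) := by
  have hm := (hX.prodMk hA).comap_le
  obtain ⟨C, hC⟩ := hGbdd
  have hG_bound : ∀ᵐ ω ∂ℙ, ‖G ω‖ ≤ C := .of_forall hC
  have hG : AEStronglyMeasurable G ℙ := (hGmeas.mono hm le_rfl).aestronglyMeasurable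
  have hG₀G : Integrable (fun ω => G₀ ω * G ω) ℙ := hG₀int.mul_bdd hG hG_bound
  have hYG : ∫ ω, Y ω * G ω ∂ℙ = ∫ ω, G₀ ω * G ω ∂ℙ := calc
    ∫ ω, Y ω * G ω ∂ℙ = ∫ ω, G ω * Y ω ∂ℙ := by simp only [mul_comm]
    _ = ∫ ω, G ω * (M₀ ω + G₀ ω) ∂ℙ := by
      rw [integral_mul_eq_integral_mul_condExp hm hGmeas.stronglyMeasurable hY C hG_bound]
      exact integral_congr_ae (hcond.mono fun ω hω => congrArg (G ω * ·) hω)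
    _ = ∫ ω, M₀ ω * G ω ∂ℙ + ∫ ω, G₀ ω * G ω ∂ℙ := by
      rw [← integral_add hMG hG₀G]
      simp only [mul_add, mul_comm]
    _ = ∫ ω, G₀ ω * G ω ∂ℙ := by rw [hMGzero, zero_add]
  have hexp := integrable_exp_of_bound hG C hG_bound
  rw [integral_sub (hY.mul_bdd hG hG_bound) hexp, hYG, ← integral_sub hG₀G hexp]
  exact integral_mul_sub_exp_le_integral_mul_log_sub hG₀pos hG₀int hG₀logint hG C hG_bound

/-- Poisson instance of Proposition 1: if `E[Y | σ(X,A)] = M₀ + G₀` a.s. with `M₀` a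
`σ(X)`-measurable integrable main effect and `G₀` a `σ(X,A)`-measurable component that is
positive a.s., integrable, and with `G₀·log G₀` integrable, then for any bounded
`σ(X,A)`-measurable candidate `G` with `E[M₀·G] = 0`,
`E[Y·G − exp G] ≤ E[G₀·log G₀ − G₀]`, with equality iff `G = log G₀` almost surely. -/
theorem stmt11 {Ω : Type*} [MeasurableSpace Ω] (ℙ : Measure Ω) [IsProbabilityMeasure ℙ]
    {p : ℕ} (X : Ω → (Fin p → ℝ)) (A : Ω → ℝ)
    (hX : Measurable X) (hA : Measurable A)
    (Y M₀ G₀ : Ω → ℝ)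
    (hY : Integrable Y ℙ)
    (hcond : ℙ[Y | MeasurableSpace.comap (fun ω => (X ω, A ω)) inferInstance]
      =ᵐ[ℙ] fun ω => M₀ ω + G₀ ω)
    (hM₀meas : Measurable[MeasurableSpace.comap X inferInstance] M₀)
    (hM₀ : Integrable M₀ ℙ)
    (hG₀meas : Measurable[MeasurableSpace.comap (fun ω => (X ω, A ω)) inferInstance] G₀)
    (hG₀pos : ∀ᵐ ω ∂ℙ, 0 < G₀ ω)
    (hG₀int : Integrable G₀ ℙ)
    (hG₀logint : Integrable (fun ω => G₀ ω * Real.log (G₀ ω)) ℙ)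
    (G : Ω → ℝ)
    (hGbdd : ∃ C, ∀ ω, |G ω| ≤ C)
    (hGmeas : Measurable[MeasurableSpace.comap (fun ω => (X ω, A ω)) inferInstance] G)
    (hMG : Integrable (fun ω => M₀ ω * G ω) ℙ)
    (hMGzero : ∫ ω, M₀ ω * G ω ∂ℙ = 0) :
    ∫ ω, (Y ω * G ω - Real.exp (G ω)) ∂ℙ ≤
      ∫ ω, (G₀ ω * Real.log (G₀ ω) - G₀ ω) ∂ℙ ∧
    (∫ ω, (Y ω * G ω - Real.exp (G ω)) ∂ℙ =
        ∫ ω, (G₀ ω * Real.log (G₀ ω) - G₀ ω) ∂ℙ ↔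
      G =ᵐ[ℙ] fun ω => Real.log (G₀ ω)) :=
  stmt11_general ℙ X A hX hA Y M₀ G₀ hY hcond hG₀pos hG₀int hG₀logint G hGbdd hGmeas hMG hMGzero
end
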